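/- Let p ≥ 3 be a prime, n ≥ 1 and k ≥ 3. Every faithful complex representation of the group SL_k(ℤ/p^nℤ) has degree at least (p^n − p^{n−1})·p^{(k−2)n}; that is, if ρ : SL_k(ℤ/p^nℤ) → GL_d(ℂ) is an injective group homomorphism, then d ≥ (p^n − p^{n−1})·p^{(k−2)n}. -/

import Mathlib

/-!
The transvections `z = E₁ₖ(1)`, `aᵣ = E₁ᵣ(1)`, `bᵣ = Eᵣₖ(1)` (`1 < r < k`) of `SL_k(ℤ/pⁿℤ)` span a
Heisenberg group: `[aᵣ, bᵣ] = z` is central of order `N = pⁿ` and all other pairs commute.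
Faithfulness makes some eigenvalue of `ρ z` a primitive `N`-th root of unity, and conjugating `z`
by diagonal matrices to `zᵗ` (`t` a unit mod `N`) shows that every primitive `N`-th root `ζ` is
one. On the `ζ`-eigenspace the `aᵣ, bᵣ` satisfy the Weyl relations `aᵣ bᵣ = ζ bᵣ aᵣ`, which
force dimension at least `N ^ (k - 2)`; summing over the `φ(N) = pⁿ - pⁿ⁻¹` primitive roots gives
the bound.
-/

open Matrix Module

theorem iSupIndep.sum_finrank_le {K V ι : Type*} [DivisionRing K] [AddCommGroup V] [Module K V]
    [FiniteDimensional K V] {p : ι → Submodule K V} (hp : iSupIndep p) (s : Finset ι) :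
    ∑ i ∈ s, finrank K (p i) ≤ finrank K V := by
  classical
  have hs : iSupIndep fun i : s => p i := hp.comp Subtype.val_injective
  calc ∑ i ∈ s, finrank K (p i) = ∑ i : s, finrank K (p i) := (Finset.sum_coe_sort s _).symm
    _ = finrank K (DirectSum s fun i => p i) := (finrank_directSum K _).symm
    _ ≤ finrank K V := LinearMap.finrank_le_finrank_of_injective hs.dfinsupp_lsum_injective

namespace Module.End

variable {K V : Type*} [Field K] [AddCommGroup V] [Module K V]

theorem sum_finrank_eigenspace_le [FiniteDimensional K V] (f : End K V) (s : Finset K) :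
    ∑ μ ∈ s, finrank K (f.eigenspace μ) ≤ finrank K V :=
  f.eigenspaces_iSupIndep.sum_finrank_le s

theorem HasEigenvalue.of_semiconjBy {f g u : End K V} (hu : Function.Injective u)
    (h : SemiconjBy u f g) {μ : K} (hμ : f.HasEigenvalue μ) : g.HasEigenvalue μ := by
  obtain ⟨v, hv⟩ := hμ.exists_hasEigenvector
  refine hasEigenvalue_of_hasEigenvector (x := u v) ⟨mem_eigenspace_iff.2 ?_, ?_⟩
  · rw [← mul_apply, ← h.eq, mul_apply, hv.apply_eq_smul, map_smul]
  · exact fun h0 => hv.2 (hu (h0.trans (map_zero u).symm))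

theorem mapsTo_eigenspace_mul_of_mul_eq_smul_mul {A B : End K V} {ζ : K}
    (h : A * B = ζ • (B * A)) (μ : K) :
    Set.MapsTo B (A.eigenspace μ) (A.eigenspace (ζ * μ)) := by
  intro v hv
  rw [SetLike.mem_coe, mem_eigenspace_iff] at hv ⊢
  rw [← mul_apply, h, LinearMap.smul_apply, mul_apply, hv, map_smul, smul_smul]

theorem eq_one_of_hasEigenvalue_one {μ : K} (h : (1 : End K V).HasEigenvalue μ) : μ = 1 := by
  obtain ⟨v, hv⟩ := h.exists_hasEigenvector
  have : (1 : K) • v = μ • v := by rw [one_smul]; exact hv.apply_eq_smul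
  exact (smul_left_injective K hv.2 this).symm

variable [IsAlgClosed K] [FiniteDimensional K V]

open Polynomial in
/-- Since `X ^ N - 1` is separable, `f` is diagonalizable, so `f ^ M = 1` as soon as
`μ ^ M = 1` for every eigenvalue `μ`. -/
theorem exists_hasEigenvalue_pow_ne_one {f : End K V} {N M : ℕ} (hN : (N : K) ≠ 0)
    (hfN : f ^ N = 1) (hfM : f ^ M ≠ 1) : ∃ μ, f.HasEigenvalue μ ∧ μ ^ M ≠ 1 := by
  by_contra! hμ
  have hM : M ≠ 0 := by rintro rfl; exact hfM (pow_zero f)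
  have hsep : (minpoly K f).Separable := by
    refine (separable_X_pow_sub_C 1 hN one_ne_zero).of_dvd (minpoly.dvd K f ?_)
    simp [hfN]
  have hroots : (minpoly K f).roots ≤ (X ^ M - C 1 : K[X]).roots := by
    refine (Multiset.le_iff_subset (nodup_roots hsep)).2 fun μ hμroot => ?_
    have hμf := hasEigenvalue_of_isRoot (isRoot_of_mem_roots hμroot)
    rw [mem_roots (X_pow_sub_C_ne_zero (Nat.pos_of_ne_zero hM) 1)]
    simp [hμ μ hμf]
  obtain ⟨q, hq⟩ := (IsAlgClosed.splits _).dvd_of_roots_le_roots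
    (minpoly.ne_zero (Algebra.IsIntegral.isIntegral f)) hroots
  simpa [sub_eq_zero, hfM] using congrArg (aeval f) hq

theorem exists_hasEigenvalue_isPrimitiveRoot {f : End K V} {p n : ℕ} [hp : Fact p.Prime]
    (hpK : (p : K) ≠ 0) (hf : orderOf f = p ^ (n + 1)) :
    ∃ μ, f.HasEigenvalue μ ∧ IsPrimitiveRoot μ (p ^ (n + 1)) := by
  have hfN : f ^ p ^ (n + 1) = 1 := hf ▸ pow_orderOf_eq_one f
  have hfM : f ^ p ^ n ≠ 1 := pow_ne_one_of_lt_orderOf (pow_ne_zero _ hp.out.ne_zero)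
    (hf ▸ Nat.pow_lt_pow_right hp.out.one_lt n.lt_succ_self)
  obtain ⟨μ, hμf, hμM⟩ :=
    exists_hasEigenvalue_pow_ne_one (by exact_mod_cast pow_ne_zero _ hpK) hfN hfM
  have hμN : μ ^ p ^ (n + 1) = 1 := eq_one_of_hasEigenvalue_one (hfN ▸ hμf.pow _)
  exact ⟨μ, hμf, orderOf_eq_prime_pow hμM hμN ▸ IsPrimitiveRoot.orderOf μ⟩

end Module.End

/-- A representation of the Heisenberg group of rank `m` on which the centre acts by `ζ`. -/
structure WeylSystem (K V : Type*) [Field K] [AddCommGroup V] [Module K V] (ζ : K) (m : ℕ) where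
  A : Fin m → End K V
  B : Fin m → End K V
  injective_A : ∀ i, Function.Injective (A i)
  injective_B : ∀ i, Function.Injective (B i)
  A_mul_B : ∀ i, A i * B i = ζ • (B i * A i)
  commute_A : ∀ i j, Commute (A i) (A j)
  commute_A_B : Pairwise fun i j => Commute (A i) (B j)
  commute_B : ∀ i j, Commute (B i) (B j)

namespace WeylSystem

variable {K V : Type*} [Field K] [AddCommGroup V] [Module K V] {ζ : K} {m : ℕ}

def tail (S : WeylSystem K V ζ (m + 1)) : WeylSystem K V ζ m where
  A i := S.A i.succ
  B i := S.B i.succ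
  injective_A i := S.injective_A i.succ
  injective_B i := S.injective_B i.succ
  A_mul_B i := S.A_mul_B i.succ
  commute_A i j := S.commute_A i.succ j.succ
  commute_A_B _ _ hij := S.commute_A_B (Fin.succ_injective _ |>.ne hij)
  commute_B i j := S.commute_B i.succ j.succ

def restrict (S : WeylSystem K V ζ m) (W : Submodule K V) (hA : ∀ i, Set.MapsTo (S.A i) W W)
    (hB : ∀ i, Set.MapsTo (S.B i) W W) : WeylSystem K W ζ m where
  A i := (S.A i).restrict (hA i)
  B i := (S.B i).restrict (hB i)
  injective_A i _ _ h := Subtype.ext (S.injective_A i congr($h.1))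
  injective_B i _ _ h := Subtype.ext (S.injective_B i congr($h.1))
  A_mul_B i := LinearMap.ext fun v => Subtype.ext congr($(S.A_mul_B i) v)
  commute_A i j := LinearMap.restrict_commute (S.commute_A i j) _ _
  commute_A_B _ _ hij := LinearMap.restrict_commute (S.commute_A_B hij) _ _
  commute_B i j := LinearMap.restrict_commute (S.commute_B i j) _ _

variable [IsAlgClosed K]

/-- For an eigenvalue `λ ≠ 0` of `A 0`, the operator `B 0` maps the `ζ ^ j * λ`-eigenspace into the
`ζ ^ (j + 1) * λ`-eigenspace, so these `N` eigenspaces are all nonzero; each of them carries the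
remaining `m` pairs. -/
theorem pow_le_finrank {N : ℕ} (hζ : IsPrimitiveRoot ζ N) :
    ∀ {m : ℕ} {V : Type*} [AddCommGroup V] [Module K V] [FiniteDimensional K V] [Nontrivial V],
      WeylSystem K V ζ m → N ^ m ≤ finrank K V := by
  intro m
  induction m with
  | zero => intro V _ _ _ _ _; exact (pow_zero N).symm ▸ finrank_pos
  | succ m ih =>
    intro V _ _ _ _ S
    classical
    obtain ⟨c, hc⟩ := (S.A 0).exists_eigenvalue
    have hc0 : c ≠ 0 := by
      rintro rfl
      exact End.hasEigenvalue_iff.1 hc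
        (by rw [End.eigenspace_zero, LinearMap.ker_eq_bot.2 (S.injective_A 0)])
    set E : ℕ → Submodule K V := fun j => (S.A 0).eigenspace (ζ ^ j * c) with hE
    have hE_ne_bot : ∀ j, E j ≠ ⊥ := by
      intro j
      induction j with
      | zero => simpa [hE] using End.hasEigenvalue_iff.1 hc
      | succ j ihj =>
        obtain ⟨v, hv, hv0⟩ := Submodule.exists_mem_ne_zero_of_ne_bot ihj
        have hBv := End.mapsTo_eigenspace_mul_of_mul_eq_smul_mul (S.A_mul_B 0) _ hv
        rw [← mul_assoc, ← pow_succ'] at hBv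
        exact (Submodule.ne_bot_iff _).2
          ⟨_, hBv, fun h => hv0 (S.injective_B 0 (h.trans (map_zero _).symm))⟩
    have hE_finrank : ∀ j, N ^ m ≤ finrank K (E j) := fun j =>
      have := Submodule.nontrivial_iff_ne_bot.2 (hE_ne_bot j)
      ih (S.tail.restrict (E j)
        (fun i => End.mapsTo_genEigenspace_of_comm (S.commute_A 0 i.succ) _ 1)
        (fun i => End.mapsTo_genEigenspace_of_comm (S.commute_A_B i.succ_ne_zero.symm) _ 1))
    have hinj : Set.InjOn (fun j => ζ ^ j * c) (Finset.range N) := fun a ha b hb hab =>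
      hζ.pow_inj (Finset.mem_range.1 ha) (Finset.mem_range.1 hb) (mul_right_cancel₀ hc0 hab)
    calc N ^ (m + 1) = ∑ _j ∈ Finset.range N, N ^ m := by simp [pow_succ, mul_comm]
      _ ≤ ∑ j ∈ Finset.range N, finrank K (E j) := Finset.sum_le_sum fun j _ => hE_finrank j
      _ = ∑ μ ∈ (Finset.range N).image (fun j => ζ ^ j * c), finrank K ((S.A 0).eigenspace μ) :=
        (Finset.sum_image (f := fun μ => finrank K ((S.A 0).eigenspace μ)) hinj).symm
      _ ≤ finrank K V := End.sum_finrank_eigenspace_le _ _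

end WeylSystem

structure IsHeisenbergFamily {G : Type*} [Group G] {m : ℕ} (z : G) (a b : Fin m → G) : Prop where
  mul_eq : ∀ i, a i * b i = z * (b i * a i)
  commute_z_a : ∀ i, Commute z (a i)
  commute_z_b : ∀ i, Commute z (b i)
  commute_a : ∀ i j, Commute (a i) (a j)
  commute_a_b : Pairwise fun i j => Commute (a i) (b j)
  commute_b : ∀ i j, Commute (b i) (b j)

namespace Representation

variable {K G V : Type*} [Field K] [Group G] [AddCommGroup V] [Module K V]
  (ρ : Representation K G V)

theorem hasEigenvalue_of_isConj {g h : G} (hgh : IsConj g h) {μ : K}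
    (hμ : End.HasEigenvalue (ρ g) μ) : End.HasEigenvalue (ρ h) μ := by
  obtain ⟨c, hc⟩ := hgh
  exact hμ.of_semiconjBy (ρ.apply_bijective c).injective (hc.map ρ)

theorem mapsTo_eigenspace_of_commute {z g : G} (h : Commute z g) (μ : K) :
    Set.MapsTo (ρ g) (End.eigenspace (ρ z) μ) (End.eigenspace (ρ z) μ) :=
  End.mapsTo_genEigenspace_of_comm (h.map ρ) μ 1

def weylSystem {m : ℕ} {z : G} {a b : Fin m → G} (h : IsHeisenbergFamily z a b) (μ : K) :
    WeylSystem K (End.eigenspace (ρ z) μ) μ m where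
  A i := (ρ (a i)).restrict (ρ.mapsTo_eigenspace_of_commute (h.commute_z_a i) μ)
  B i := (ρ (b i)).restrict (ρ.mapsTo_eigenspace_of_commute (h.commute_z_b i) μ)
  injective_A i _ _ hvw := Subtype.ext ((ρ.apply_bijective _).injective congr($hvw.1))
  injective_B i _ _ hvw := Subtype.ext ((ρ.apply_bijective _).injective congr($hvw.1))
  A_mul_B i := LinearMap.ext fun v => Subtype.ext <| by
    have hv := ρ.mapsTo_eigenspace_of_commute
      ((h.commute_z_b i).mul_right (h.commute_z_a i)) μ v.2
    have hv' := End.mem_eigenspace_iff.1 hv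
    rw [← End.mul_apply, ← map_mul, ← h.mul_eq, map_mul, map_mul] at hv'
    exact hv'
  commute_A i j := LinearMap.restrict_commute ((h.commute_a i j).map ρ) _ _
  commute_A_B _ _ hij := LinearMap.restrict_commute ((h.commute_a_b hij).map ρ) _ _
  commute_B i j := LinearMap.restrict_commute ((h.commute_b i j).map ρ) _ _

theorem totient_mul_pow_le_finrank [IsAlgClosed K] [FiniteDimensional K V] {m : ℕ} {z : G}
    {a b : Fin m → G} (h : IsHeisenbergFamily z a b) {ζ : K} {N : ℕ} (hζ : IsPrimitiveRoot ζ N)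
    (hζz : End.HasEigenvalue (ρ z) ζ) (hconj : ∀ t, t.Coprime N → IsConj z (z ^ t)) :
    N.totient * N ^ m ≤ finrank K V := by
  obtain rfl | hN := N.eq_zero_or_pos
  · simp
  have : NeZero N := ⟨hN.ne'⟩
  have hμ_finrank : ∀ μ ∈ primitiveRoots N K, N ^ m ≤ finrank K (End.eigenspace (ρ z) μ) := by
    intro μ hμ
    have hμ := (mem_primitiveRoots hN).1 hμ
    obtain ⟨t, -, rfl⟩ := hζ.eq_pow_of_pow_eq_one hμ.pow_eq_one
    have hζz_pow : End.HasEigenvalue (ρ (z ^ t)) (ζ ^ t) := by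
      rw [map_pow]; exact hζz.pow t
    have hμz : End.HasEigenvalue (ρ z) (ζ ^ t) :=
      ρ.hasEigenvalue_of_isConj (hconj t ((hζ.pow_iff_coprime hN t).1 hμ)).symm hζz_pow
    have := Submodule.nontrivial_iff_ne_bot.2 (End.hasEigenvalue_iff.1 hμz)
    exact WeylSystem.pow_le_finrank hμ (ρ.weylSystem h _)
  calc N.totient * N ^ m = ∑ _μ ∈ primitiveRoots N K, N ^ m := by
        rw [Finset.sum_const, hζ.card_primitiveRoots, smul_eq_mul]
    _ ≤ ∑ μ ∈ primitiveRoots N K, finrank K (End.eigenspace (ρ z) μ) := Finset.sum_le_sum hμ_finrank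
    _ ≤ finrank K V := End.sum_finrank_eigenspace_le _ _

end Representation

namespace Matrix

variable {ι R : Type*} [Fintype ι] [DecidableEq ι] [CommRing R]

theorem transvection_commute {i j i' j' : ι} (hji' : j ≠ i') (hj'i : j' ≠ i) (c c' : R) :
    Commute (transvection i j c) (transvection i' j' c') := by
  simp only [Commute, SemiconjBy, transvection, Matrix.mul_add, Matrix.add_mul, Matrix.mul_one,
    Matrix.one_mul, single_mul_single_of_ne _ _ _ _ hji', single_mul_single_of_ne _ _ _ _ hj'i]
  abel

theorem transvection_mul_transvection_swap {i j l : ι} (hil : i ≠ l) (hjl : j ≠ l) (c c' : R) :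
    transvection i j c * transvection j l c' =
      transvection i l (c * c') * (transvection j l c' * transvection i j c) := by
  simp only [transvection, Matrix.mul_add, Matrix.add_mul, Matrix.mul_one, Matrix.one_mul,
    single_mul_single_same, single_mul_single_of_ne _ _ _ _ hil.symm,
    single_mul_single_of_ne _ _ _ _ hjl.symm, add_zero]
  abel

namespace SpecialLinearGroup

theorem transvection_commute {i j i' j' : ι} {hij : i ≠ j} {hij' : i' ≠ j'} (hji' : j ≠ i')
    (hj'i : j' ≠ i) (c c' : R) : Commute (transvection hij c) (transvection hij' c') :=
  Subtype.ext (Matrix.transvection_commute hji' hj'i c c')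

def transvectionHom {i j : ι} (hij : i ≠ j) : Multiplicative R →* SpecialLinearGroup ι R where
  toFun c := transvection hij c.toAdd
  map_one' := transvection_coeff_zero hij
  map_mul' c c' := transvection_add hij c.toAdd c'.toAdd

theorem transvectionHom_injective {i j : ι} (hij : i ≠ j) :
    Function.Injective (transvectionHom (R := R) hij) := fun c c' h => by
  simpa [transvectionHom, transvection_coe, hij] using congr($h i j)

theorem orderOf_transvection {i j : ι} (hij : i ≠ j) (c : R) :
    orderOf (transvection hij c) = addOrderOf c := by
  rw [← orderOf_ofAdd_eq_addOrderOf,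
    ← orderOf_injective _ (transvectionHom_injective hij) (Multiplicative.ofAdd c)]
  rfl

theorem transvection_pow {i j : ι} (hij : i ≠ j) (c : R) (t : ℕ) :
    transvection hij c ^ t = transvection hij (t * c) := by
  rw [← nsmul_eq_mul]
  exact (map_pow (transvectionHom hij) (Multiplicative.ofAdd c) t).symm

/-- Conjugation by `diag(u, u⁻¹)` in positions `i, j` (and `1` elsewhere) scales the `(i, l)`
entry by `u`. -/
theorem isConj_transvection_unit_mul {i j l : ι} (hij : i ≠ j) (hil : i ≠ l) (hjl : j ≠ l)
    (u : Rˣ) (c : R) : IsConj (transvection hil c) (transvection hil (u * c)) := by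
  set δ : ι → R := Pi.mulSingle i (u : R) * Pi.mulSingle j (u⁻¹ : Rˣ)
  have hδ : (diagonal δ).det = 1 := by
    simp [δ, Finset.prod_mul_distrib, Finset.prod_pi_mulSingle']
  have hδi : δ i = u := by simp [δ, hij]
  have hδl : δ l = 1 := by simp [δ, hil.symm, hjl.symm]
  have hmat : diagonal δ * Matrix.transvection i l c =
      Matrix.transvection i l (u * c) * diagonal δ := by
    ext a b
    rw [diagonal_mul, mul_diagonal]
    simp only [Matrix.transvection, add_apply, one_apply, single_apply]
    split_ifs with hab hial hial
    · exact absurd (hial.1.trans (hab.trans hial.2.symm)) hil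
    · rw [hab]; ring
    · obtain ⟨rfl, rfl⟩ := hial; rw [hδi, hδl]; ring
    · ring
  have hconj : SemiconjBy (M := SpecialLinearGroup ι R) ⟨diagonal δ, hδ⟩ (transvection hil c)
      (transvection hil (u * c)) := Subtype.ext hmat
  exact ⟨toUnits _, hconj⟩

theorem isHeisenbergFamily_transvection {m : ℕ} {i l : ι} (hil : i ≠ l) {w : Fin m → ι}
    (hw : Function.Injective w) (hiw : ∀ r, i ≠ w r) (hwl : ∀ r, w r ≠ l) :
    IsHeisenbergFamily (transvection hil (1 : R)) (fun r => transvection (hiw r) 1)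
      (fun r => transvection (hwl r) 1) where
  mul_eq r := Subtype.ext <| by
    have := Matrix.transvection_mul_transvection_swap hil (hwl r) (1 : R) 1
    rwa [mul_one] at this
  commute_z_a r := transvection_commute hil.symm (hiw r).symm 1 1
  commute_z_b r := transvection_commute (hwl r).symm hil.symm 1 1
  commute_a r s := transvection_commute (hiw r).symm (hiw s).symm 1 1
  commute_a_b _ _ hrs := transvection_commute (hw.ne hrs) hil.symm 1 1
  commute_b r s := transvection_commute (hwl s).symm (hwl r).symm 1 1

end SpecialLinearGroup

end Matrix

theorem slk_faithful_rep_dim_lower_bound_general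
    (p n k d : ℕ) (hp : p.Prime) (hn : 1 ≤ n) (hk : 3 ≤ k)
    (ρ : Matrix.SpecialLinearGroup (Fin k) (ZMod (p ^ n)) →* GL (Fin d) ℂ)
    (hinj : Function.Injective ρ) :
    ((p : ℝ) ^ n - (p : ℝ) ^ (n - 1)) * (p : ℝ) ^ ((k - 2) * n) ≤ d := by
  have : Fact p.Prime := ⟨hp⟩
  obtain ⟨n, rfl⟩ : ∃ n', n = n' + 1 := ⟨n - 1, by omega⟩
  let σ : Representation ℂ (SpecialLinearGroup (Fin k) (ZMod (p ^ (n + 1)))) (Fin d → ℂ) :=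
    (Matrix.toLinAlgEquiv' : Matrix (Fin d) (Fin d) ℂ ≃ₐ[ℂ] _).toRingEquiv.toMonoidHom.comp
      ((Units.coeHom _).comp ρ)
  have hσ : Function.Injective σ := fun _ _ h =>
    hinj (Units.ext (Matrix.toLinAlgEquiv'.injective h))
  let i : Fin k := ⟨0, by omega⟩
  let j : Fin k := ⟨1, by omega⟩
  let l : Fin k := ⟨k - 1, by omega⟩
  let w : Fin (k - 2) → Fin k := fun r => ⟨r + 1, by omega⟩
  have hij : i ≠ j := by simp [i, j, Fin.ext_iff]
  have hil : i ≠ l := by simp [i, l, Fin.ext_iff]; omega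
  have hjl : j ≠ l := by simp [j, l, Fin.ext_iff]; omega
  have hw : Function.Injective w := fun r s h => by simpa [w, Fin.ext_iff] using h
  have hiw : ∀ r, i ≠ w r := fun r => by simp [i, w, Fin.ext_iff]
  have hwl : ∀ r, w r ≠ l := fun r => by simp [w, l, Fin.ext_iff]; omega
  set z := SpecialLinearGroup.transvection hil (1 : ZMod (p ^ (n + 1))) with hz_def
  have hz : orderOf (σ z) = p ^ (n + 1) := by
    rw [orderOf_injective σ hσ, SpecialLinearGroup.orderOf_transvection, ZMod.addOrderOf_one]
  obtain ⟨ζ, hζz, hζ⟩ := End.exists_hasEigenvalue_isPrimitiveRoot (by exact_mod_cast hp.ne_zero) hz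
  have hconj : ∀ t, t.Coprime (p ^ (n + 1)) → IsConj z (z ^ t) := fun t ht => by
    rw [hz_def, SpecialLinearGroup.transvection_pow, ← ZMod.coe_unitOfCoprime t ht]
    exact SpecialLinearGroup.isConj_transvection_unit_mul hij hil hjl _ 1
  have hbound := σ.totient_mul_pow_le_finrank
    (SpecialLinearGroup.isHeisenbergFamily_transvection hil hw hiw hwl) hζ hζz hconj
  rw [Module.finrank_fin_fun] at hbound
  calc ((p : ℝ) ^ (n + 1) - (p : ℝ) ^ (n + 1 - 1)) * (p : ℝ) ^ ((k - 2) * (n + 1))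
      = (((p ^ (n + 1)).totient * (p ^ (n + 1)) ^ (k - 2) : ℕ) : ℝ) := by
        rw [Nat.totient_prime_pow_succ hp]; push_cast [hp.one_le]; ring
    _ ≤ d := by exact_mod_cast hbound

/-- Every faithful complex representation of `SL_k(ℤ/pⁿℤ)` (p ≥ 3 prime, n ≥ 1, k ≥ 3)
has degree at least `(pⁿ - pⁿ⁻¹) · p^((k-2)n)`. -/
theorem slk_faithful_rep_dim_lower_bound
    (p n k d : ℕ) (hp : p.Prime) (hp3 : 3 ≤ p) (hn : 1 ≤ n) (hk : 3 ≤ k) (hd : 1 ≤ d)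
    (ρ : Matrix.SpecialLinearGroup (Fin k) (ZMod (p ^ n)) →* GL (Fin d) ℂ)
    (hinj : Function.Injective ρ) :
    ((p : ℝ) ^ n - (p : ℝ) ^ (n - 1)) * (p : ℝ) ^ ((k - 2) * n) ≤ d :=
  slk_faithful_rep_dim_lower_bound_general p n k d hp hn hk ρ hinj
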